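/- arXiv:2305.01049 — 4 statements merged into one kernel-verified Lean document; each statement's English description precedes it below -/
import Mathlib

section
/- In the free Banach space construction over a metric space (X, d) with d ≤ 1, for any distinct points x₁, ..., xₙ ∈ X and scalars λ₁, ..., λₙ ∈ ℝ, the norm of Σᵢ λᵢ xᵢ in L(X) is at least (1/2) · (Σᵢ |λᵢ|) · min{d(xᵢ, xⱼ) : i ≠ j}. -/
/-
Every function `f : X → ℝ` that is `1`-Lipschitz and bounded by `1` in absolute value, extended
by `f * = 0`, is `1`-Lipschitz for the extended metric, so its linear extension `F` to `L(X)`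
satisfies `F w ≤ ∑ᵢ |λᵢ| d(xᵢ, yᵢ)` for every representation of `w`, i.e. `F w ≤ ‖w‖`.
With `δ` the minimal distance between the `xᵢ`, the values `cᵢ = (δ / 2) · sign λᵢ` at the
points `xᵢ` are `1`-Lipschitz there, and by McShane's extension theorem (followed by truncation
to `[-1, 1]`) they come from such an `f`; it evaluates `∑ᵢ λᵢ xᵢ` to `(δ / 2) ∑ᵢ |λᵢ|`.
-/

noncomputable section

/-- The metric on `X ⊔ {*}` (with `none` playing the role of the basepoint `*`),
where the new point `*` is at distance `1` from every point of `X`. -/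
def optDist (X : Type) [MetricSpace X] : Option X → Option X → ℝ
  | some x, some y => dist x y
  | none, none => 0
  | _, _ => 1

/-- The norm on the free normed space `L(X)` over `(X, d)` with `d ≤ 1`
(realized as finitely supported functions on `Option X`, with `none` the basepoint `*`):
the infimum of `∑ᵢ |λᵢ| d(xᵢ, yᵢ)` over all representations `∑ᵢ λᵢ xᵢ = w` with
`∑ᵢ λᵢ yᵢ ∈ Span{*}`. -/
def freeNorm (X : Type) [MetricSpace X] (w : Option X →₀ ℝ) : ℝ :=
  sInf { r : ℝ | ∃ (n : ℕ) (lam : Fin n → ℝ) (a b : Fin n → Option X),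
    (∑ i, lam i • Finsupp.single (a i) (1 : ℝ)) = w ∧
    (∃ c : ℝ, (∑ i, lam i • Finsupp.single (b i) (1 : ℝ)) =
        c • Finsupp.single (none : Option X) (1 : ℝ)) ∧
    r = ∑ i, |lam i| * optDist X (a i) (b i) }

open Finsupp Function

lemma exists_freeNorm_representation {α : Type*} (w : Option α →₀ ℝ) :
    ∃ (m : ℕ) (μ : Fin m → ℝ) (a b : Fin m → Option α),
      (∑ i, μ i • single (a i) (1 : ℝ)) = w ∧
      ∃ c : ℝ,
        (∑ i, μ i • single (b i) (1 : ℝ)) = c • single (none : Option α) (1 : ℝ) := by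
  let e := w.support.equivFin.symm
  refine ⟨_, fun i => w (e i), fun i => e i, fun _ => none, ?_, _, Finset.sum_smul.symm⟩
  calc (∑ i, w (e i) • single (e i : Option α) (1 : ℝ))
      = ∑ u ∈ w.support, single u (w u) := by
        simp only [smul_single_one]
        exact (e.sum_comp fun u => single (u : Option α) (w u)).trans
          (Finset.sum_coe_sort w.support fun u => single u (w u))
    _ = w := w.sum_single

lemma linearCombination_sum_smul_single {α : Type*} (f : α → ℝ) {m : ℕ} (μ : Fin m → ℝ)
    (a : Fin m → α) :
    linearCombination ℝ f (∑ i, μ i • single (a i) (1 : ℝ)) = ∑ i, μ i * f (a i) := by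
  simp

section Duality

variable {X : Type} [MetricSpace X]

lemma abs_elim_sub_elim_le_optDist {f : X → ℝ} (hf : LipschitzWith 1 f)
    (hf_le : ∀ z, |f z| ≤ 1) (u v : Option X) :
    |u.elim 0 f - v.elim 0 f| ≤ optDist X u v := by
  match u, v with
  | none, none => simp [optDist]
  | none, Option.some z => simpa [optDist] using hf_le z
  | Option.some z, none => simpa [optDist] using hf_le z
  | Option.some y, Option.some z => simpa [optDist, ← Real.dist_eq] using hf.dist_le_mul y z

lemma linearCombination_elim_le_freeNorm {f : X → ℝ} (hf : LipschitzWith 1 f)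
    (hf_le : ∀ z, |f z| ≤ 1) (w : Option X →₀ ℝ) :
    linearCombination ℝ (fun u => u.elim 0 f) w ≤ freeNorm X w := by
  set F : Option X → ℝ := fun u => u.elim 0 f
  obtain ⟨m, μ, a, b, hw, hb⟩ := exists_freeNorm_representation w
  refine le_csInf ⟨_, m, μ, a, b, hw, hb, rfl⟩ ?_
  rintro r ⟨m, μ, a, b, rfl, ⟨c, hc⟩, rfl⟩
  have hb_zero : ∑ i, μ i * F (b i) = 0 := by
    rw [← linearCombination_sum_smul_single, hc]
    simp [F]
  calc linearCombination ℝ F (∑ i, μ i • single (a i) (1 : ℝ))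
      = ∑ i, μ i * (F (a i) - F (b i)) := by
        simp only [linearCombination_sum_smul_single, mul_sub, Finset.sum_sub_distrib, hb_zero,
          sub_zero]
    _ ≤ ∑ i, |μ i * (F (a i) - F (b i))| := Finset.sum_le_sum fun i _ => le_abs_self _
    _ ≤ ∑ i, |μ i| * optDist X (a i) (b i) := Finset.sum_le_sum fun i _ => by
        rw [abs_mul]
        exact mul_le_mul_of_nonneg_left
          (abs_elim_sub_elim_le_optDist hf hf_le (a i) (b i)) (abs_nonneg _)

end Duality

lemma exists_lipschitzWith_abs_le_one_extension {X ι : Type*} [PseudoMetricSpace X]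
    {x : ι → X} (hx : Injective x) {c : ι → ℝ} (hc : ∀ i j, |c i - c j| ≤ dist (x i) (x j))
    (hc_le : ∀ i, |c i| ≤ 1) :
    ∃ g : X → ℝ, LipschitzWith 1 g ∧ (∀ z, |g z| ≤ 1) ∧ ∀ i, g (x i) = c i := by
  have hlip : LipschitzOnWith 1 (extend x c 0) (Set.range x) := by
    refine LipschitzOnWith.of_dist_le_mul ?_
    rintro _ ⟨i, rfl⟩ _ ⟨j, rfl⟩
    simpa [hx.extend_apply, Real.dist_eq] using hc i j
  obtain ⟨g, hg, hgx⟩ := hlip.extend_real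
  refine ⟨fun z => max (-1) (min 1 (g z)), (hg.const_min 1).const_max (-1),
    fun z => abs_le.2 ⟨le_max_left _ _, max_le (by norm_num) (min_le_left _ _)⟩, fun i => ?_⟩
  have hgi : g (x i) = c i := by rw [← hgx (Set.mem_range_self i), hx.extend_apply]
  obtain ⟨hneg, hpos⟩ := abs_le.1 (hc_le i)
  simp only [hgi, min_eq_right hpos, max_eq_right hneg]

lemma abs_sign_le_one (t : ℝ) : |(SignType.sign t : ℝ)| ≤ 1 := by
  rcases SignType.sign t with _ | _ | _ <;> simp

theorem freeNorm_lower_bound_general (X : Type) [MetricSpace X]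
    (hd : ∀ x y : X, dist x y ≤ 1)
    {n : ℕ} (x : Fin n → X) (hx : Function.Injective x)
    (lam : Fin n → ℝ) :
    (1 / 2) * (∑ i, |lam i|) *
        sInf { r : ℝ | ∃ i j : Fin n, i ≠ j ∧ r = dist (x i) (x j) } ≤
      freeNorm X (∑ i, lam i • Finsupp.single (some (x i)) (1 : ℝ)) := by
  set S := { r : ℝ | ∃ i j : Fin n, i ≠ j ∧ r = dist (x i) (x j) }
  have hS : ∀ r ∈ S, 0 ≤ r := by rintro r ⟨i, j, -, rfl⟩; exact dist_nonneg
  have hδ_nonneg : 0 ≤ sInf S := Real.sInf_nonneg hS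
  have hδ_le : ∀ i j, i ≠ j → sInf S ≤ dist (x i) (x j) :=
    fun i j hij => csInf_le ⟨0, hS⟩ ⟨i, j, hij, rfl⟩
  have hδ_le_one : sInf S ≤ 1 := by
    rcases S.eq_empty_or_nonempty with hS_empty | ⟨_, i, j, hij, rfl⟩
    · simp [hS_empty]
    · exact (hδ_le i j hij).trans (hd _ _)
  set c : Fin n → ℝ := fun i => sInf S / 2 * SignType.sign (lam i)
  have hc_le : ∀ i, |c i| ≤ sInf S / 2 := fun i => by
    rw [abs_mul, abs_of_nonneg (by positivity)]
    exact mul_le_of_le_one_right (by positivity) (abs_sign_le_one _)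
  have hc : ∀ i j, |c i - c j| ≤ dist (x i) (x j) := fun i j => by
    rcases eq_or_ne i j with rfl | hij
    · simp
    · linarith [abs_sub (c i) (c j), hc_le i, hc_le j, hδ_le i j hij]
  obtain ⟨g, hg, hg_le, hgx⟩ :=
    exists_lipschitzWith_abs_le_one_extension hx hc fun i => (hc_le i).trans (by linarith)
  calc (1 / 2) * (∑ i, |lam i|) * sInf S
      = ∑ i, lam i * c i := by
        rw [Finset.mul_sum, Finset.sum_mul]
        refine Finset.sum_congr rfl fun i _ => ?_
        rw [← sign_mul_self]
        ring
    _ = linearCombination ℝ (fun u => u.elim 0 g)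
          (∑ i, lam i • single (some (x i)) (1 : ℝ)) := by
        simp [hgx]
    _ ≤ _ := linearCombination_elim_le_freeNorm hg hg_le _

/-- for distinct points `x₁, ..., xₙ ∈ X` and scalars `λ₁, ..., λₙ ∈ ℝ`,
`‖∑ᵢ λᵢ xᵢ‖ ≥ (1/2) · (∑ᵢ |λᵢ|) · min{d(xᵢ, xⱼ) : i ≠ j}` in `L(X)`
(the minimum over the distinct pairs is expressed as an infimum). -/
theorem freeNorm_lower_bound (X : Type) [MetricSpace X]
    (hd : ∀ x y : X, dist x y ≤ 1)
    {n : ℕ} (hn : 2 ≤ n) (x : Fin n → X) (hx : Function.Injective x)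
    (lam : Fin n → ℝ) :
    (1 / 2) * (∑ i, |lam i|) *
        sInf { r : ℝ | ∃ i j : Fin n, i ≠ j ∧ r = dist (x i) (x j) } ≤
      freeNorm X (∑ i, lam i • Finsupp.single (some (x i)) (1 : ℝ)) :=
  freeNorm_lower_bound_general X hd x hx lam
end
end

section
/- Every locally finite Borel graph H on a standard Borel space admits a Borel proper coloring c : V → ℕ (adjacent vertices receive distinct colors). -/
/-!
Embed `V` into `ℝ` and enumerate the rational open intervals `I n`. A vertex `v` has finitely
many neighbours, none equal to `v`, so some `I n` contains `e v` but no `e u` with `u` adjacent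
to `v`; colour `v` by the least such `n`. Adjacent vertices get distinct colours, and the
colouring is Borel once every set `{v | ∃ u, (v, u) ∈ H ∧ e u ∈ I n}` is Borel.

That is the finite-section case of the Lusin–Novikov theorem: the projection of a Borel set with
finite sections is Borel. If all sections have at most `k + 1` points, the points lying below
another point of their section form the projection of a Borel set with sections of at most `k`
points, and what remains is a graph, whose projection is Borel by Lusin–Souslin. In general,
Novikov's separation theorem (proved like Lusin's, by refining cylinders in Baire space) gives
Borel sets `C k ⊇ {x | k ≤ #B_x}` with empty intersection, and off `C k` sections have fewer
than `k` points.
-/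

open Set Function MeasureTheory PiNat Filter

def MeasurablySeparableFamily {ι α : Type*} [MeasurableSpace α] (s : ι → Set α) : Prop :=
  ∃ C : ι → Set α, (∀ n, s n ⊆ C n) ∧ (∀ n, MeasurableSet (C n)) ∧ ⋂ n, C n = ∅

namespace MeasurablySeparableFamily

variable {ι α : Type*} [MeasurableSpace α] {s : ι → Set α}

theorem of_subset_of_subset {a b : ι} {u v : Set α} (hu : MeasurableSet u)
    (hv : MeasurableSet v) (huv : Disjoint u v) (ha : s a ⊆ u) (hb : s b ⊆ v) :
    MeasurablySeparableFamily s := by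
  classical
  refine ⟨fun n => (if n = a then u else univ) ∩ (if n = b then v else univ), fun n => ?_,
    fun n => ?_, ?_⟩
  · by_cases hna : n = a <;> by_cases hnb : n = b <;> subst_vars <;> simp [*]
  · exact MeasurableSet.inter (by split_ifs <;> simp [hu]) (by split_ifs <;> simp [hv])
  · refine eq_empty_of_subset_empty fun z hz => huv.le_bot ⟨?_, ?_⟩
    · simpa using (mem_iInter.1 hz a).1
    · simpa using (mem_iInter.1 hz b).2

theorem update_iUnion [DecidableEq ι] {κ : Type*} [Countable κ] {n : ι} {t : κ → Set α}
    (h : ∀ i, MeasurablySeparableFamily (update s n (t i))) :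
    MeasurablySeparableFamily (update s n (⋃ i, t i)) := by
  choose C hsub hmeas hempty using h
  refine ⟨update (fun m => ⋂ i, C i m) n (⋃ i, C i n), fun m => ?_, fun m => ?_, ?_⟩
  · rcases eq_or_ne m n with rfl | hmn
    · simpa using iUnion_mono fun i => by simpa using hsub i m
    · simpa [hmn] using fun i => by simpa [hmn] using hsub i m
  · rcases eq_or_ne m n with rfl | hmn
    · simpa using .iUnion fun i => hmeas i m
    · simpa [hmn] using .iInter fun i => hmeas i m
  · refine eq_empty_of_subset_empty fun z hz => ?_
    obtain ⟨i, hi⟩ := mem_iUnion.1 (by simpa using mem_iInter.1 hz n)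
    rw [← hempty i]
    refine mem_iInter.2 fun m => ?_
    rcases eq_or_ne m n with rfl | hmn
    · exact hi
    · exact mem_iInter.1 (by simpa [hmn] using mem_iInter.1 hz m) i

end MeasurablySeparableFamily

/-- Parametrising the `n`-th set of a family by row `n` of a single `w : ℕ → ℕ` turns one
cylinder into simultaneous cylinders for all members; fixing the coordinate `m` refines only the
member `(Nat.unpair m).1`. -/
def pairSlice (n : ℕ) (w : ℕ → ℕ) : ℕ → ℕ := fun j => w (Nat.pair n j)

theorem surjective_pairSlice (n : ℕ) : Surjective (pairSlice n) :=
  fun y => ⟨fun k => y (Nat.unpair k).2, funext fun j => by simp [pairSlice]⟩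

theorem continuous_pairSlice (n : ℕ) : Continuous (pairSlice n) :=
  continuous_pi fun _ => continuous_apply _

theorem image_pairSlice_cylinder_update {n m : ℕ} (hn : n ≠ (Nat.unpair m).1) (z : ℕ → ℕ)
    (i : ℕ) : pairSlice n '' cylinder (update z m i) (m + 1) = pairSlice n '' cylinder z m := by
  refine (image_mono fun w hw => ?_).antisymm ?_
  · exact (mem_cylinder_iff_eq.1 (update_mem_cylinder z m i)) ▸ cylinder_anti _ m.le_succ hw
  · rintro _ ⟨w, hw, rfl⟩
    refine ⟨update w m i, mem_cylinder_iff.2 fun j hj => ?_, funext fun j => ?_⟩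
    · rcases (Nat.lt_succ_iff_lt_or_eq.1 hj) with hj | rfl
      · simpa [hj.ne] using mem_cylinder_iff.1 hw j hj
      · simp
    · have : Nat.pair n j ≠ m := by rintro rfl; simp at hn
      simp [pairSlice, this]

theorem Continuous.eventually_image_cylinder_subset {α : Type*} [TopologicalSpace α]
    {g : (ℕ → ℕ) → α} (hg : Continuous g) {u : Set α} (hu : IsOpen u) {d : ℕ → ℕ}
    (hd : g d ∈ u) : ∀ᶠ m in atTop, g '' cylinder d m ⊆ u := by
  obtain ⟨_, ⟨x, n, rfl⟩, hdx, hsub⟩ := (isTopologicalBasis_cylinders fun _ => ℕ)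
    |>.exists_subset_of_mem_open (show d ∈ g ⁻¹' u from hd) (hu.preimage hg)
  filter_upwards [eventually_ge_atTop n] with m hm
  rw [image_subset_iff]
  exact (cylinder_anti d hm).trans ((mem_cylinder_iff_eq.1 hdx) ▸ hsub)

theorem exists_forall_mem_of_forall_exists_update {P : ℕ → Set (ℕ → ℕ)}
    (hP : ∀ m z w, z ∈ P m → w ∈ cylinder z m → w ∈ P m) {z₀ : ℕ → ℕ} (h₀ : z₀ ∈ P 0)
    (hstep : ∀ m z, z ∈ P m → ∃ i, update z m i ∈ P (m + 1)) : ∃ d, ∀ m, d ∈ P m := by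
  choose! i hi using hstep
  let s : ℕ → ℕ → ℕ := fun m => Nat.rec z₀ (fun m z => update z m (i m z)) m
  have hs : ∀ m, s m ∈ P m := fun m => Nat.rec h₀ (fun m ih => hi m _ ih) m
  have stable : ∀ j k, j < k → s k j = s (j + 1) j := by
    intro j k hjk
    induction hjk with
    | refl => rfl
    | step hle ih => simpa [s, update_of_ne (Nat.ne_of_lt hle)] using ih
  exact ⟨fun j => s (j + 1) j, fun m =>
    hP m _ _ (hs m) (mem_cylinder_iff.2 fun j hj => (stable j m hj).symm)⟩

section Novikov

variable {α : Type*} [MeasurableSpace α]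

theorem measurablySeparableFamily_image_cylinder_of_update (f : ℕ → (ℕ → ℕ) → α)
    (z : ℕ → ℕ) (m : ℕ) (h : ∀ i, MeasurablySeparableFamily fun n =>
      f n '' (pairSlice n '' cylinder (update z m i) (m + 1))) :
    MeasurablySeparableFamily fun n => f n '' (pairSlice n '' cylinder z m) := by
  set s := fun n => f n '' (pairSlice n '' cylinder z m)
  set a := (Nat.unpair m).1
  have hs : update s a (⋃ i, f a '' (pairSlice a '' cylinder (update z m i) (m + 1))) = s := by
    rw [update_eq_self_iff, ← image_iUnion, ← image_iUnion]
    exact congrArg _ (congrArg _ (iUnion_cylinder_update z m))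
  have hsi : ∀ i, (fun n => f n '' (pairSlice n '' cylinder (update z m i) (m + 1))) =
      update s a (f a '' (pairSlice a '' cylinder (update z m i) (m + 1))) := by
    intro i
    funext n
    rcases eq_or_ne n a with rfl | hn
    · simp
    · simp [s, hn, image_pairSlice_cylinder_update hn]
  rw [← hs]
  exact MeasurablySeparableFamily.update_iUnion fun i => hsi i ▸ h i

variable [TopologicalSpace α] [T2Space α] [OpensMeasurableSpace α]

theorem exists_measurablySeparableFamily_image_cylinder
    {g : ℕ → (ℕ → ℕ) → α} (hg : ∀ n, Continuous (g n)) {d : ℕ → ℕ} {a b : ℕ}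
    (hab : g a d ≠ g b d) : ∃ m, MeasurablySeparableFamily fun n => g n '' cylinder d m := by
  obtain ⟨u, v, hu, hv, hau, hbv, huv⟩ := t2_separation hab
  obtain ⟨m, hma, hmb⟩ := (((hg a).eventually_image_cylinder_subset hu hau).and
    ((hg b).eventually_image_cylinder_subset hv hbv)).exists
  exact ⟨m, .of_subset_of_subset hu.measurableSet hv.measurableSet huv hma hmb⟩

theorem measurablySeparableFamily_range
    {f : ℕ → (ℕ → ℕ) → α} (hf : ∀ n, Continuous (f n)) (h : ⋂ n, range (f n) = ∅) :
    MeasurablySeparableFamily fun n => range (f n) := by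
  set P : ℕ → Set (ℕ → ℕ) := fun m =>
    {z | ¬ MeasurablySeparableFamily fun n => f n '' (pairSlice n '' cylinder z m)}
  by_contra hsep
  obtain ⟨d, hd⟩ : ∃ d, ∀ m, d ∈ P m := by
    refine exists_forall_mem_of_forall_exists_update (z₀ := 0) ?_ ?_ ?_
    · intro m z w hz hw
      simpa [P, mem_cylinder_iff_eq.1 hw] using hz
    · simpa [P, cylinder_zero, (surjective_pairSlice _).range_eq] using hsep
    · intro m z hz
      by_contra! hall
      exact hz (measurablySeparableFamily_image_cylinder_of_update f z m (by simpa [P] using hall))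
  set g := fun n w => f n (pairSlice n w)
  simp only [P, image_image] at hd
  by_cases hconst : ∀ n, g n d = g 0 d
  · have : g 0 d ∈ ⋂ n, range (f n) := mem_iInter.2 fun n => hconst n ▸ mem_range_self _
    simp [h] at this
  · obtain ⟨n, hn⟩ := not_forall.1 hconst
    obtain ⟨m, hm⟩ := exists_measurablySeparableFamily_image_cylinder
      (fun n => (hf n).comp (continuous_pairSlice n)) hn
    exact hd m hm

theorem AnalyticSet.measurablySeparableFamily {s : ℕ → Set α} (hs : ∀ n, AnalyticSet (s n))
    (h : ⋂ n, s n = ∅) : MeasurablySeparableFamily s := by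
  by_cases hne : ∀ n, (s n).Nonempty
  · have : ∀ n, ∃ f : (ℕ → ℕ) → α, Continuous f ∧ range f = s n := by
      intro n
      have hsn := hs n
      rw [AnalyticSet] at hsn
      exact hsn.resolve_left (hne n).ne_empty
    choose f hf hfs using this
    have := measurablySeparableFamily_range hf (by simpa only [hfs] using h)
    simpa only [hfs] using this
  · obtain ⟨n, hn⟩ := not_forall.1 hne
    rw [not_nonempty_iff_eq_empty] at hn
    exact .of_subset_of_subset .empty .empty (disjoint_empty _) hn.subset hn.subset

end Novikov

section Projection

variable {X : Type*}

/-- Its projection to `X × ℝ` is the set of points of `B` that are not the top of their section. -/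
def strictUpperPairs (B : Set (X × ℝ)) : Set ((X × ℝ) × ℝ) :=
  {p | p.1 ∈ B ∧ (p.1.1, p.2) ∈ B ∧ p.1.2 < p.2}

theorem MeasurableSet.strictUpperPairs [MeasurableSpace X] {B : Set (X × ℝ)}
    (hB : MeasurableSet B) : MeasurableSet (strictUpperPairs B) :=
  (measurable_fst hB).inter (((measurable_fst.fst.prodMk measurable_snd) hB).inter
    (measurableSet_lt measurable_fst.snd measurable_snd))

theorem encard_preimage_prodMk_strictUpperPairs_le {B : Set (X × ℝ)} {k : ℕ}
    (hk : ∀ x, (Prod.mk x ⁻¹' B).encard ≤ k + 1) (p : X × ℝ) :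
    (Prod.mk p ⁻¹' strictUpperPairs B).encard ≤ k := by
  by_cases hp : p ∈ B
  · have hsub : Prod.mk p ⁻¹' strictUpperPairs B ⊆ Prod.mk p.1 ⁻¹' B \ {p.2} :=
      fun y hy => ⟨hy.2.1, hy.2.2.ne'⟩
    have hcard := encard_sdiff_singleton_add_one (show p.2 ∈ Prod.mk p.1 ⁻¹' B from hp)
    have : (Prod.mk p.1 ⁻¹' B \ {p.2}).encard ≤ k := by
      rw [← ENat.add_le_add_iff_right ENat.one_ne_top, hcard]
      exact hk p.1
    exact (encard_le_encard hsub).trans this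
  · have : Prod.mk p ⁻¹' strictUpperPairs B = ∅ :=
      eq_empty_of_forall_notMem fun y hy => hp hy.1
    simp [this]

theorem injOn_fst_diff_image_fst_strictUpperPairs (B : Set (X × ℝ)) :
    InjOn Prod.fst (B \ Prod.fst '' strictUpperPairs B) := by
  rintro ⟨x, y₁⟩ h₁ ⟨x', y₂⟩ h₂ (rfl : x = x')
  rcases lt_trichotomy y₁ y₂ with hlt | rfl | hgt
  · exact (h₁.2 ⟨((x, y₁), y₂), ⟨h₁.1, h₂.1, hlt⟩, rfl⟩).elim
  · rfl
  · exact (h₂.2 ⟨((x, y₂), y₁), ⟨h₂.1, h₁.1, hgt⟩, rfl⟩).elim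

theorem image_fst_diff_image_fst_strictUpperPairs {B : Set (X × ℝ)}
    (hfin : ∀ x, (Prod.mk x ⁻¹' B).Finite) :
    Prod.fst '' (B \ Prod.fst '' strictUpperPairs B) = Prod.fst '' B := by
  refine (image_mono sdiff_subset).antisymm ?_
  rintro x ⟨⟨x, y⟩, hxy, rfl⟩
  obtain ⟨b, hb, hmax⟩ := exists_max_image (Prod.mk x ⁻¹' B) id (hfin x) ⟨y, hxy⟩
  refine ⟨(x, b), ⟨hb, ?_⟩, rfl⟩
  rintro ⟨⟨⟨x', b'⟩, y'⟩, ⟨-, hy', hlt⟩, heq⟩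
  cases heq
  exact (hmax y' hy').not_gt hlt

theorem measurableSet_image_fst_of_encard_le [MeasurableSpace X] [StandardBorelSpace X] (k : ℕ)
    {B : Set (X × ℝ)} (hB : MeasurableSet B) (hk : ∀ x, (Prod.mk x ⁻¹' B).encard ≤ k) :
    MeasurableSet (Prod.fst '' B) := by
  induction k generalizing X with
  | zero =>
    have : B = ∅ := eq_empty_of_forall_notMem fun p hp =>
      (encard_eq_zero.1 (nonpos_iff_eq_zero.1 (hk p.1))).subset (show p.2 ∈ _ from hp)
    simp [this]
  | succ k ih =>
    have hupper := ih hB.strictUpperPairs (encard_preimage_prodMk_strictUpperPairs_le hk)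
    rw [← image_fst_diff_image_fst_strictUpperPairs fun x => finite_of_encard_le_coe (hk x)]
    exact (hB.diff hupper).image_of_measurable_injOn measurable_fst
      (injOn_fst_diff_image_fst_strictUpperPairs B)

end Projection

theorem Set.natCast_le_encard_iff_exists_injective {α : Type*} {s : Set α} {k : ℕ} :
    (k : ℕ∞) ≤ s.encard ↔ ∃ g : Fin k → α, Injective g ∧ range g ⊆ s := by
  constructor
  · intro h
    obtain ⟨y, -⟩ := Fin.Embedding.exists_embedding_disjoint_range_of_add_le_ENat_card
      (s := (∅ : Set s)) (n := k) (by rw [ncard_empty, Nat.cast_zero, zero_add]; exact h)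
    exact ⟨Subtype.val ∘ y, Subtype.val_injective.comp y.injective,
      range_subset_iff.2 fun i => (y i).2⟩
  · rintro ⟨g, hg, hgs⟩
    simpa using hg.encard_range.trans (encard_le_encard hgs)

theorem measurableSet_setOf_injective {ι β : Type*} [Countable ι] [MeasurableSpace β]
    [MeasurableEq β] : MeasurableSet {g : ι → β | Injective g} := by
  simp only [Injective, ofPred_forall]
  exact .iInter fun i => .iInter fun j => by measurability

theorem MeasurableSet.analyticSet_setOf_natCast_le_encard {X : Type*} [MeasurableSpace X]
    [StandardBorelSpace X] [TopologicalSpace X] [OpensMeasurableSpace X]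
    [SecondCountableTopology X] {B : Set (X × ℝ)} (hB : MeasurableSet B) (k : ℕ) :
    AnalyticSet {x | (k : ℕ∞) ≤ (Prod.mk x ⁻¹' B).encard} := by
  have : {x | (k : ℕ∞) ≤ (Prod.mk x ⁻¹' B).encard} = Prod.fst ''
      ({p : X × (Fin k → ℝ) | Injective p.2} ∩ ⋂ i, (fun p => (p.1, p.2 i)) ⁻¹' B) := by
    ext x
    simp [natCast_le_encard_iff_exists_injective, range_subset_iff]
  rw [this]
  refine MeasurableSet.analyticSet_image ?_ measurable_fst
  exact (measurable_snd measurableSet_setOf_injective).inter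
    (.iInter fun i => (measurable_fst.prodMk ((measurable_pi_apply i).comp measurable_snd)) hB)

theorem measurableSet_image_fst_of_finite_real {X : Type*} [MeasurableSpace X]
    [StandardBorelSpace X] {B : Set (X × ℝ)} (hB : MeasurableSet B)
    (hfin : ∀ x, (Prod.mk x ⁻¹' B).Finite) : MeasurableSet (Prod.fst '' B) := by
  let := upgradeStandardBorel X
  set S : ℕ → Set X := fun k => {x | (k : ℕ∞) ≤ (Prod.mk x ⁻¹' B).encard}
  have hS : ⋂ k, S k = ∅ := by
    refine eq_empty_of_forall_notMem fun x hx => ?_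
    obtain ⟨n, hn⟩ := (hfin x).exists_encard_eq_coe
    have : ((n + 1 : ℕ) : ℕ∞) ≤ n := hn ▸ mem_iInter.1 hx (n + 1)
    exact n.lt_irrefl (by exact_mod_cast this)
  obtain ⟨C, hSC, hC, hCempty⟩ :=
    AnalyticSet.measurablySeparableFamily (fun k => hB.analyticSet_setOf_natCast_le_encard k) hS
  have hcover : Prod.fst '' B = ⋃ k, Prod.fst '' (B ∩ (C k)ᶜ ×ˢ univ) := by
    refine (iUnion_subset fun k => image_mono inter_subset_left).antisymm' ?_
    rintro _ ⟨p, hp, rfl⟩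
    have : p.1 ∉ ⋂ k, C k := hCempty ▸ notMem_empty p.1
    obtain ⟨k, hk⟩ := not_forall.1 (mem_iInter.not.1 this)
    exact mem_iUnion.2 ⟨k, p, ⟨hp, hk, trivial⟩, rfl⟩
  rw [hcover]
  refine .iUnion fun k =>
    measurableSet_image_fst_of_encard_le k (hB.inter ((hC k).compl.prod .univ)) fun x => ?_
  by_cases hx : x ∈ C k
  · simp [preimage, hx]
  · exact (encard_le_encard inter_subset_left).trans (le_of_lt (not_le.1 fun h => hx (hSC k h)))

theorem measurableSet_image_fst_of_finite {X Y : Type*} [MeasurableSpace X]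
    [StandardBorelSpace X] [MeasurableSpace Y] [StandardBorelSpace Y] {B : Set (X × Y)}
    (hB : MeasurableSet B) (hfin : ∀ x, (Prod.mk x ⁻¹' B).Finite) :
    MeasurableSet (Prod.fst '' B) := by
  obtain ⟨e, he⟩ := exists_measurableEmbedding_real Y
  have hsec : ∀ x, Prod.mk x ⁻¹' (Prod.map id e '' B) ⊆ e '' (Prod.mk x ⁻¹' B) := by
    rintro x _ ⟨⟨x', y⟩, hy, heq⟩
    simp only [Prod.map, Prod.mk.injEq] at heq
    obtain ⟨rfl, rfl⟩ := heq
    exact ⟨y, hy, rfl⟩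
  have := measurableSet_image_fst_of_finite_real
    ((MeasurableEmbedding.id.prodMap he).measurableSet_image.2 hB)
    fun x => ((hfin x).image e).subset (hsec x)
  rwa [image_image] at this

theorem exists_measurable_proper_coloring_of_isolating {V : Type*} [MeasurableSpace V]
    {H : Set (V × V)} {U : ℕ → Set V} (hU : ∀ n, MeasurableSet (U n))
    (hHU : ∀ n, MeasurableSet {v | ∃ u ∈ U n, (v, u) ∈ H})
    (hiso : ∀ v, ∃ n, v ∈ U n ∧ ∀ u ∈ U n, (v, u) ∉ H) :
    ∃ c : V → ℕ, Measurable c ∧ ∀ u v, (u, v) ∈ H → c u ≠ c v := by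
  classical
  refine ⟨fun v => Nat.find (hiso v), measurable_find hiso fun n => ?_, fun u v huv hc => ?_⟩
  · convert (hU n).diff (hHU n) using 1
    ext v
    simp
  · have hv : v ∈ U (Nat.find (hiso u)) := (congrArg U hc).symm ▸ (Nat.find_spec (hiso v)).1
    exact (Nat.find_spec (hiso u)).2 v hv huv

theorem Set.Finite.exists_rat_Ioo_subset_compl {F : Set ℝ} (hF : F.Finite) {z : ℝ}
    (hz : z ∉ F) : ∃ a b : ℚ, z ∈ Ioo (a : ℝ) b ∧ Ioo (a : ℝ) b ⊆ Fᶜ := by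
  obtain ⟨_, hI, hzI, hIsub⟩ :=
    Real.isTopologicalBasis_Ioo_rat.exists_subset_of_mem_open hz hF.isClosed.isOpen_compl
  simp only [mem_iUnion, mem_singleton_iff] at hI
  obtain ⟨a, b, -, rfl⟩ := hI
  exact ⟨a, b, hzI, hIsub⟩

theorem exists_borel_proper_coloring_general (V : Type) [MeasurableSpace V]
    [StandardBorelSpace V] (H : Set (V × V))
    (hBorel : MeasurableSet H)
    (hirr : ∀ v : V, (v, v) ∉ H)
    (hlf : ∀ v : V, {u : V | (v, u) ∈ H}.Finite) :
    ∃ c : V → ℕ, Measurable c ∧ ∀ u v : V, (u, v) ∈ H → c u ≠ c v := by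
  obtain ⟨e, he⟩ := exists_measurableEmbedding_real V
  obtain ⟨q, hq⟩ := exists_surjective_nat (ℚ × ℚ)
  set U : ℕ → Set V := fun n => e ⁻¹' Ioo ((q n).1 : ℝ) (q n).2
  have hU : ∀ n, MeasurableSet (U n) := fun n => he.measurable measurableSet_Ioo
  refine exists_measurable_proper_coloring_of_isolating hU (fun n => ?_) fun v => ?_
  · have hproj := measurableSet_image_fst_of_finite
      (hBorel.inter (MeasurableSet.univ.prod (hU n))) fun v => (hlf v).subset fun u hu => hu.1
    convert hproj using 1
    ext v
    simp [and_comm]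
  · have hv : e v ∉ e '' {u | (v, u) ∈ H} :=
      fun ⟨u, hu, heq⟩ => hirr v (he.injective heq ▸ hu)
    obtain ⟨a, b, hvI, hIsub⟩ := ((hlf v).image e).exists_rat_Ioo_subset_compl hv
    obtain ⟨n, hn⟩ := hq (a, b)
    exact ⟨n, by simpa [U, hn] using hvI,
      fun u hu huv => hIsub (by simpa [U, hn] using hu) ⟨u, huv, rfl⟩⟩

/-- every locally finite Borel graph `H` on a standard Borel space `V`
admits a Borel proper coloring `c : V → ℕ` (adjacent vertices receive distinct
colors). -/
theorem exists_borel_proper_coloring (V : Type) [MeasurableSpace V]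
    [StandardBorelSpace V] (H : Set (V × V))
    (hBorel : MeasurableSet H)
    (hsym : ∀ u v : V, (u, v) ∈ H → (v, u) ∈ H)
    (hirr : ∀ v : V, (v, v) ∉ H)
    (hlf : ∀ v : V, {u : V | (v, u) ∈ H}.Finite) :
    ∃ c : V → ℕ, Measurable c ∧ ∀ u v : V, (u, v) ∈ H → c u ≠ c v :=
  exists_borel_proper_coloring_general V H hBorel hirr hlf
end

section
/- Let G be a Polish group acting continuously on a Polish space X, let C ⊆ X be closed, and suppose (x, G) ≤₂ (y, G). If x ∈ C^{ΔG} (i.e., there exist g ∈ G and an open neighborhood V of the identity with Vg·x ⊆ C), then y ∈ C^{ΔG}. -/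
/-- The relation `(x, U) ≤₂ (y, V)` from the Hjorth analysis of a continuous Polish
group action: for every nonempty open `U' ⊆ U` there is a nonempty open `V' ⊆ V` with
`V'·y ⊆ closure(U'·x)`. -/
def Le2 {G X : Type} [Group G] [TopologicalSpace G] [MulAction G X]
    [TopologicalSpace X] (x : X) (U : Set G) (y : X) (V : Set G) : Prop :=
  ∀ U' : Set G, U' ⊆ U → IsOpen U' → U'.Nonempty →
    ∃ V' : Set G, V' ⊆ V ∧ IsOpen V' ∧ V'.Nonempty ∧
      (fun g => g • y) '' V' ⊆ closure ((fun g => g • x) '' U')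

/-- Membership in the Vaught transform `C^{ΔG}` of a closed set `C`: there exist
`g ∈ G` and an open neighborhood `V` of the identity with `Vg·x ⊆ C`. -/
def MemDeltaG (G : Type) {X : Type} [Group G] [TopologicalSpace G] [MulAction G X]
    (C : Set X) (x : X) : Prop :=
  ∃ (g : G) (V : Set G), IsOpen V ∧ (1 : G) ∈ V ∧ ∀ v ∈ V, (v * g) • x ∈ C

open Set

theorem memDeltaG_iff_exists_isOpen_mapsTo {G X : Type} [Group G] [TopologicalSpace G]
    [ContinuousMul G] [MulAction G X] {C : Set X} {x : X} :
    MemDeltaG G C x ↔ ∃ U : Set G, IsOpen U ∧ U.Nonempty ∧ MapsTo (· • x) U C := by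
  constructor
  · rintro ⟨g, V, hV, hV1, hVC⟩
    refine ⟨(· * g⁻¹) ⁻¹' V, hV.preimage (continuous_mul_const g⁻¹), ⟨g, by simpa⟩, ?_⟩
    intro u hu
    simpa using hVC _ hu
  · rintro ⟨U, hU, ⟨h, hh⟩, hUC⟩
    exact ⟨h, (· * h) ⁻¹' U, hU.preimage (continuous_mul_const h), by simpa, fun v hv => hUC hv⟩

theorem Le2.exists_isOpen_mapsTo {G X : Type} [Group G] [TopologicalSpace G] [MulAction G X]
    [TopologicalSpace X] {x y : X} {U₀ V₀ : Set G} (hle : Le2 x U₀ y V₀) {C : Set X}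
    (hC : IsClosed C) {U : Set G} (hUU₀ : U ⊆ U₀) (hU : IsOpen U) (hUne : U.Nonempty)
    (hUC : MapsTo (· • x) U C) :
    ∃ V ⊆ V₀, IsOpen V ∧ V.Nonempty ∧ MapsTo (· • y) V C := by
  obtain ⟨V, hVV₀, hV, hVne, hVU⟩ := hle U hUU₀ hU hUne
  exact ⟨V, hVV₀, hV, hVne, mapsTo_iff_image_subset.2 <|
    hVU.trans (closure_minimal hUC.image_subset hC)⟩

theorem deltaG_invariant_le2_general
    (G : Type) [Group G] [TopologicalSpace G] [IsTopologicalGroup G]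
    (X : Type) [TopologicalSpace X]
    [MulAction G X]
    (C : Set X) (hC : IsClosed C) (x y : X)
    (hle : Le2 x (Set.univ : Set G) y (Set.univ : Set G))
    (hx : MemDeltaG G C x) : MemDeltaG G C y := by
  obtain ⟨U, hU, hUne, hUC⟩ := memDeltaG_iff_exists_isOpen_mapsTo.1 hx
  obtain ⟨V, -, hV, hVne, hVC⟩ := hle.exists_isOpen_mapsTo hC (subset_univ U) hU hUne hUC
  exact memDeltaG_iff_exists_isOpen_mapsTo.2 ⟨V, hV, hVne, hVC⟩

/-- for a continuous action of a Polish group `G` on a Polish space `X`,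
a closed set `C ⊆ X`, and points with `(x, G) ≤₂ (y, G)`: if `x ∈ C^{ΔG}` then
`y ∈ C^{ΔG}`. -/
theorem deltaG_invariant_le2
    (G : Type) [Group G] [TopologicalSpace G] [PolishSpace G] [IsTopologicalGroup G]
    (X : Type) [TopologicalSpace X] [PolishSpace X]
    [MulAction G X] [ContinuousSMul G X]
    (C : Set X) (hC : IsClosed C) (x y : X)
    (hle : Le2 x (Set.univ : Set G) y (Set.univ : Set G))
    (hx : MemDeltaG G C x) : MemDeltaG G C y :=
  deltaG_invariant_le2_general G X C hC x y hle hx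
end

section
/- Let G = Πₙ Gₙ be a countable product of Polish groups acting continuously on a Polish space Z, let H_{≤n} ≤ G be the subgroup of sequences that are the identity in all coordinates k ≤ n, and let (U_k) enumerate a countable basis of Z. Then the map fₙ : Z → F(G)^ω, fₙ(x) = ⟨ closure{g ∈ G : H_{≤n} g · x ∩ U_k ≠ ∅} ⟩_{k∈ω}, is a Borel homomorphism from the orbit equivalence relation E_a of G ↷ Z to the orbit equivalence relation of the right-translation action of H_{>n} on F(G)^ω, where h · ⟨C_k⟩ = ⟨C_k h^{−1}⟩ and H_{>n} is the subgroup of sequences that are the identity in all coordinates k > n. -/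
/-!
Write `A_U(x) = {g | H g · x ∩ U ≠ ∅}` for the normal subgroup `H = H_{≤n}`. Translating the
point only translates this set on the right, `A_U(g · x) = A_U(x) g⁻¹`, and `A_U(x)` is
right `H`-invariant because `H` is normal and `A_U(x)` is left `H`-invariant. Hence `g⁻¹` may be
replaced by `h⁻¹`, where `h` agrees with `g` on the coordinates `≤ n` and is `1` elsewhere, so
`h ∈ H_{>n}`. Borelness is easier: `closure A_U(x)` meets an open `V` iff `A_U(x)` does, and
the set of such `x` is open since `U` is open and the action is continuous.
-/

/-- The Effros Borel structure on the space `F(Y)` of closed subsets of `Y`. -/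
def EffrosSigma (Y : Type) [TopologicalSpace Y] :
    MeasurableSpace {C : Set Y // IsClosed C} :=
  MeasurableSpace.generateFrom
    { S | ∃ U : Set Y, IsOpen U ∧
        S = {C : {C : Set Y // IsClosed C} | ((C : Set Y) ∩ U).Nonempty} }

open Set

theorem measurable_effrosSigma_closure {X : Type*} {Y : Type} [MeasurableSpace X]
    [TopologicalSpace Y] {F : X → Set Y}
    (hF : ∀ V, IsOpen V → MeasurableSet {x | (F x ∩ V).Nonempty}) :
    @Measurable X _ _ (EffrosSigma Y) fun x => ⟨closure (F x), isClosed_closure⟩ := by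
  refine measurable_generateFrom ?_
  rintro _ ⟨V, hV, rfl⟩
  simpa only [preimage_ofPred_eq, closure_inter_open_nonempty_iff hV] using hF V hV

namespace Subgroup

variable {η : Type*} {f : η → Type*} [∀ i, Group (f i)]

instance pi_normal (I : Set η) (H : ∀ i, Subgroup (f i)) [∀ i, (H i).Normal] :
    (pi I H).Normal where
  conj_mem _ hx g i hi := Normal.conj_mem inferInstance _ (hx i hi) (g i)

theorem mem_pi_bot {I : Set η} {p : ∀ i, f i} :
    p ∈ pi I (fun _ => ⊥) ↔ ∀ i ∈ I, p i = 1 := by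
  simp only [mem_pi, mem_bot]

theorem inv_mul_mem_pi_bot_piecewise (I : Set η) [∀ i, Decidable (i ∈ I)] (g : ∀ i, f i) :
    (I.piecewise g 1)⁻¹ * g ∈ pi I (fun _ => ⊥) :=
  mem_pi_bot.2 fun i hi => by simp [Set.piecewise_eq_of_mem _ _ _ hi]

end Subgroup

namespace MulAction

variable {G Z : Type*} [Group G] [MulAction G Z]

def hittingSet (H : Subgroup G) (U : Set Z) (x : Z) : Set G :=
  {g | ∃ h ∈ H, (h * g) • x ∈ U}

variable {H : Subgroup G} {U : Set Z}

theorem hittingSet_smul (g : G) (x : Z) :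
    hittingSet H U (g • x) = (· * g) ⁻¹' hittingSet H U x := by
  ext c
  simp only [hittingSet, mem_preimage, mem_ofPred_eq, smul_smul, mul_assoc]

theorem mem_hittingSet_of_mul_mem [H.Normal] {x : Z} {c s : G} (hs : s ∈ H)
    (hcs : c * s ∈ hittingSet H U x) : c ∈ hittingSet H U x := by
  obtain ⟨e, he, hmem⟩ := hcs
  refine ⟨e * (c * s * c⁻¹), H.mul_mem he (‹H.Normal›.conj_mem s hs c), ?_⟩
  rwa [mul_assoc, inv_mul_cancel_right]

theorem mul_mem_hittingSet_iff [H.Normal] {x : Z} {c s : G} (hs : s ∈ H) :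
    c * s ∈ hittingSet H U x ↔ c ∈ hittingSet H U x :=
  ⟨mem_hittingSet_of_mul_mem hs, fun hc =>
    mem_hittingSet_of_mul_mem (H.inv_mem hs) (by rwa [mul_inv_cancel_right])⟩

theorem hittingSet_smul_of_inv_mul_mem [H.Normal] {g h : G} (hgh : h⁻¹ * g ∈ H) (x : Z) :
    hittingSet H U (g • x) = (· * h⁻¹) '' hittingSet H U x := by
  ext c
  rw [hittingSet_smul, image_mul_right, inv_inv, mem_preimage, mem_preimage,
    ← mul_mem_hittingSet_iff (U := U) (x := x) (c := c * h) hgh, mul_assoc, mul_inv_cancel_left]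

theorem isOpen_setOf_hittingSet_inter_nonempty [TopologicalSpace Z] [ContinuousConstSMul G Z]
    (hU : IsOpen U) (V : Set G) : IsOpen {x : Z | (hittingSet H U x ∩ V).Nonempty} := by
  have hunion : {x : Z | (hittingSet H U x ∩ V).Nonempty} =
      ⋃ c ∈ V, ⋃ h ∈ H, (fun x : Z => (h * c) • x) ⁻¹' U := by
    ext x
    simp only [hittingSet, mem_iUnion, mem_preimage, exists_prop]
    exact ⟨fun ⟨c, ⟨h, hh, hx⟩, hc⟩ => ⟨c, hc, h, hh, hx⟩,
      fun ⟨c, hc, h, hh, hx⟩ => ⟨c, ⟨h, hh, hx⟩, hc⟩⟩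
  rw [hunion]
  exact isOpen_biUnion fun c _ => isOpen_biUnion fun h _ => hU.preimage (continuous_const_smul _)

end MulAction

open MulAction

theorem product_group_tail_homomorphism_general
    (G : ℕ → Type) [∀ n, Group (G n)] [∀ n, TopologicalSpace (G n)]
    [∀ n, IsTopologicalGroup (G n)]
    (Z : Type) [TopologicalSpace Z] [MeasurableSpace Z] [BorelSpace Z]
    [MulAction (∀ n, G n) Z] [ContinuousSMul (∀ n, G n) Z]
    (U : ℕ → Set Z) (hUopen : ∀ k, IsOpen (U k))
    (n : ℕ) :
    ∃ f : Z → ℕ → {C : Set (∀ k, G k) // IsClosed C},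
      (∀ (x : Z) (k : ℕ), (f x k : Set (∀ k, G k)) =
        closure {g : ∀ k, G k |
          ∃ h : ∀ k, G k, (∀ j, j ≤ n → h j = 1) ∧ (h * g) • x ∈ U k}) ∧
      @Measurable Z (ℕ → {C : Set (∀ k, G k) // IsClosed C}) _
        (@MeasurableSpace.pi ℕ _ fun _ => EffrosSigma (∀ k, G k)) f ∧
      (∀ x y : Z, (∃ g : ∀ k, G k, g • x = y) →
        ∃ h : ∀ k, G k, (∀ j, n < j → h j = 1) ∧
          ∀ k, (f y k : Set (∀ k, G k)) =
            (fun c => c * h⁻¹) '' (f x k : Set (∀ k, G k))) := by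
  classical
  set H : Subgroup (∀ k, G k) := Subgroup.pi (Iic n) fun _ => ⊥
  refine ⟨fun x k => ⟨closure (hittingSet H (U k) x), isClosed_closure⟩, fun x k => ?_, ?_, ?_⟩
  · simp only [hittingSet, H, Subgroup.mem_pi_bot, mem_Iic]
  · let _ := EffrosSigma (∀ k, G k)
    exact measurable_pi_lambda _ fun k => measurable_effrosSigma_closure fun V _ =>
      (isOpen_setOf_hittingSet_inter_nonempty (hUopen k) V).measurableSet
  · rintro x _ ⟨g, rfl⟩
    refine ⟨(Iic n).piecewise g 1, fun j hj => piecewise_eq_of_notMem _ _ _ (not_le.2 hj),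
      fun k => ?_⟩
    change closure _ = _ '' closure _
    rw [hittingSet_smul_of_inv_mul_mem (Subgroup.inv_mul_mem_pi_bot_piecewise _ g)]
    exact ((Homeomorph.mulRight _).image_closure _).symm

/-- let `G = Πₙ Gₙ` be a countable product of Polish groups acting
continuously on a Polish space `Z`, let `H_{≤n}` be the subgroup of sequences that are
the identity in all coordinates `k ≤ n`, and let `(U_k)` enumerate a countable basis of
`Z`.  Then the map `fₙ(x) = ⟨closure {g : H_{≤n} g · x ∩ U_k ≠ ∅}⟩_{k}` is a Borel
homomorphism from the orbit equivalence relation of `G ↷ Z` to the orbit equivalence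
relation of the right-translation action `h · ⟨C_k⟩ = ⟨C_k h⁻¹⟩` of `H_{>n}` (the
subgroup of sequences that are the identity in all coordinates `k > n`) on `F(G)^ω`. -/
theorem product_group_tail_homomorphism
    (G : ℕ → Type) [∀ n, Group (G n)] [∀ n, TopologicalSpace (G n)]
    [∀ n, IsTopologicalGroup (G n)] [∀ n, PolishSpace (G n)]
    (Z : Type) [TopologicalSpace Z] [PolishSpace Z] [MeasurableSpace Z] [BorelSpace Z]
    [MulAction (∀ n, G n) Z] [ContinuousSMul (∀ n, G n) Z]
    (U : ℕ → Set Z) (hUopen : ∀ k, IsOpen (U k))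
    (hUbasis : TopologicalSpace.IsTopologicalBasis (Set.range U))
    (n : ℕ) :
    ∃ f : Z → ℕ → {C : Set (∀ k, G k) // IsClosed C},
      (∀ (x : Z) (k : ℕ), (f x k : Set (∀ k, G k)) =
        closure {g : ∀ k, G k |
          ∃ h : ∀ k, G k, (∀ j, j ≤ n → h j = 1) ∧ (h * g) • x ∈ U k}) ∧
      @Measurable Z (ℕ → {C : Set (∀ k, G k) // IsClosed C}) _
        (@MeasurableSpace.pi ℕ _ fun _ => EffrosSigma (∀ k, G k)) f ∧
      (∀ x y : Z, (∃ g : ∀ k, G k, g • x = y) →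
        ∃ h : ∀ k, G k, (∀ j, n < j → h j = 1) ∧
          ∀ k, (f y k : Set (∀ k, G k)) =
            (fun c => c * h⁻¹) '' (f x k : Set (∀ k, G k))) :=
  product_group_tail_homomorphism_general G Z U hUopen n
end
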